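/- Fix e∈[0,1), e_J∈[0,1), Θ∈ℝ, i∈(0,π/2), G>0, and define Ā₂(a), B̄₂(a), C̄₂(a) as in the context. Then there exists a₀>0 such that for all a with 0<a<a₀ the quadratic form W̄₂(p₃,q₃) = ½(Ā₂(a)·p₃² + 2B̄₂(a)·p₃q₃ + C̄₂(a)·q₃²) is positive definite: for every (p₃,q₃) ≠ (0,0) one has Ā₂(a)·p₃² + 2B̄₂(a)·p₃q₃ + C̄₂(a)·q₃² > 0. -/
import Mathlib


open Real

/-- Averaged coefficient `Ā₂` of `p₃²` in the general inner case, `ω+Ω=Θ`, inclination `i`. -/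
noncomputable def Abar2 (e eJ Θ i G a : ℝ) : ℝ :=
  Real.sin i ^ 2 * (1 + 4 * e ^ 2 - 5 * e ^ 2 * Real.cos Θ ^ 2) * a ^ 2 /
      (4 * G * (1 - eJ ^ 2) ^ ((3:ℝ) / 2) * (1 - Real.cos i))
    - 15 * Real.cos Θ * eJ * e * (3 * e ^ 2 + 4) * a ^ 3 /
      (16 * G * (1 - Real.cos i) * (1 - eJ ^ 2) ^ ((5:ℝ) / 2))

/-- Averaged coefficient `B̄₂` of `p₃q₃` in the general inner case, `ω+Ω=Θ`, inclination `i`. -/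
noncomputable def Bbar2 (e eJ Θ i G a : ℝ) : ℝ :=
  5 * Real.sin i ^ 2 * Real.cos Θ * Real.sin Θ * e ^ 2 * a ^ 2 /
      (4 * G * (1 - eJ ^ 2) ^ ((3:ℝ) / 2) * (1 - Real.cos i))
    + 15 * Real.sin Θ * eJ * e * (3 * e ^ 2 + 4) * a ^ 3 /
      (32 * G * (1 - eJ ^ 2) ^ ((5:ℝ) / 2))

/-- Averaged coefficient `C̄₂` of `q₃²` in the general inner case, `ω+Ω=Θ`, inclination `i`. -/
noncomputable def Cbar2 (e eJ Θ i G a : ℝ) : ℝ :=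
  Real.sin i ^ 2 * (5 * e ^ 2 * Real.cos Θ ^ 2 - e ^ 2 + 1) * a ^ 2 /
      (4 * G * (1 - eJ ^ 2) ^ ((3:ℝ) / 2) * (1 - Real.cos i))
    - 15 * Real.cos i * Real.cos Θ * eJ * e * (3 * e ^ 2 + 4) * a ^ 3 /
      (16 * G * (1 - Real.cos i) * (1 - eJ ^ 2) ^ ((5:ℝ) / 2))



lemma quad_pos_of (A B C : ℝ) (hA : 0 < A) (hd : 0 < A * C - B ^ 2) :
    ∀ p q : ℝ, (p, q) ≠ (0, 0) → 0 < A * p ^ 2 + 2 * B * p * q + C * q ^ 2 := by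
  intro p q hpq
  rcases eq_or_ne q 0 with hq | hq
  · subst hq
    have hp : p ≠ 0 := by simpa using hpq
    have : 0 < A * p ^ 2 := by positivity
    nlinarith
  · have hq2 : 0 < q ^ 2 := by positivity
    nlinarith [sq_nonneg (A * p + B * q), mul_pos hd hq2]

lemma exists_a0 (α β γ δ ε ζ : ℝ) (hα : 0 < α) (hdet : 0 < α * ε - γ ^ 2) :
    ∃ a₀ > 0, ∀ a : ℝ, 0 < a → a < a₀ →
      0 < α + β * a ∧ 0 < (α + β * a) * (ε + ζ * a) - (γ + δ * a) ^ 2 := by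
  set d1 := α * ζ + β * ε - 2 * γ * δ with hd1
  set d2 := β * ζ - δ ^ 2 with hd2
  refine ⟨min 1 (min (α / (|β| + 1)) ((α * ε - γ ^ 2) / (|d1| + |d2| + 1))), by positivity, ?_⟩
  intro a ha ha0
  have h1 : a < 1 := lt_of_lt_of_le ha0 (min_le_left _ _)
  have h2 : a < α / (|β| + 1) :=
    lt_of_lt_of_le ha0 (le_trans (min_le_right _ _) (min_le_left _ _))
  have h3 : a < (α * ε - γ ^ 2) / (|d1| + |d2| + 1) :=
    lt_of_lt_of_le ha0 (le_trans (min_le_right _ _) (min_le_right _ _))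
  have hb : (|β| + 1) * a < α := by
    have := (lt_div_iff₀ (by positivity : (0:ℝ) < |β| + 1)).1 h2; linarith [mul_comm a (|β| + 1)]
  have hdd : (|d1| + |d2| + 1) * a < α * ε - γ ^ 2 := by
    have := (lt_div_iff₀ (by positivity : (0:ℝ) < |d1| + |d2| + 1)).1 h3; linarith [mul_comm a (|d1| + |d2| + 1)]
  have hβ1 : -|β| ≤ β := neg_abs_le β
  have hpos : 0 < α + β * a := by nlinarith
  refine ⟨hpos, ?_⟩
  have heq : (α + β * a) * (ε + ζ * a) - (γ + δ * a) ^ 2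
      = (α * ε - γ ^ 2) + d1 * a + d2 * a ^ 2 := by rw [hd1, hd2]; ring
  rw [heq]
  have h4 : -|d1| ≤ d1 := neg_abs_le d1
  have h5 : -|d2| ≤ d2 := neg_abs_le d2
  have ha2 : a ^ 2 ≤ a := by nlinarith
  nlinarith [abs_nonneg d1, abs_nonneg d2, mul_le_mul_of_nonneg_left ha2 (abs_nonneg d2)]

set_option maxHeartbeats 1600000 in
theorem general_inner_case_quadratic_form_positive_definite
    (e eJ Θ i G : ℝ) (he0 : 0 ≤ e) (he1 : e < 1) (heJ0 : 0 ≤ eJ) (heJ1 : eJ < 1)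
    (hi : i ∈ Set.Ioo 0 (Real.pi / 2)) (hG : 0 < G) :
    ∃ a₀ > 0, ∀ a : ℝ, 0 < a → a < a₀ →
      ∀ p₃ q₃ : ℝ, (p₃, q₃) ≠ (0, 0) →
        0 < Abar2 e eJ Θ i G a * p₃ ^ 2 + 2 * Bbar2 e eJ Θ i G a * p₃ * q₃
            + Cbar2 e eJ Θ i G a * q₃ ^ 2 := by
  
  obtain ⟨hi0, hi2⟩ := hi
  have hpi := Real.pi_pos
  have hsin : 0 < Real.sin i := Real.sin_pos_of_pos_of_lt_pi hi0 (by linarith)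
  have hcosp : 0 < Real.cos i := Real.cos_pos_of_mem_Ioo ⟨by linarith, hi2⟩
  have hcos1 : Real.cos i < 1 := by
    nlinarith [Real.sin_sq_add_cos_sq i, mul_pos hsin hsin]
  have heJ2 : 0 < 1 - eJ ^ 2 := by nlinarith
  have hr3 : 0 < (1 - eJ ^ 2) ^ ((3:ℝ) / 2) := Real.rpow_pos_of_pos heJ2 _
  have hr5 : 0 < (1 - eJ ^ 2) ^ ((5:ℝ) / 2) := Real.rpow_pos_of_pos heJ2 _
  have hci : 0 < 1 - Real.cos i := by linarith
  have hsc := Real.sin_sq_add_cos_sq Θ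
  obtain ⟨D3, hD3⟩ : ∃ x : ℝ, x = 4 * G * (1 - eJ ^ 2) ^ ((3:ℝ) / 2) * (1 - Real.cos i) :=
    ⟨_, rfl⟩
  obtain ⟨D5, hD5⟩ : ∃ x : ℝ, x = 16 * G * (1 - Real.cos i) * (1 - eJ ^ 2) ^ ((5:ℝ) / 2) :=
    ⟨_, rfl⟩
  obtain ⟨D5b, hD5b⟩ : ∃ x : ℝ, x = 32 * G * (1 - eJ ^ 2) ^ ((5:ℝ) / 2) := ⟨_, rfl⟩
  have hD3p : 0 < D3 := by rw [hD3]; positivity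
  have hD5p : 0 < D5 := by rw [hD5]; positivity
  have hD5bp : 0 < D5b := by rw [hD5b]; positivity
  obtain ⟨c, hc⟩ : ∃ x : ℝ, x = Real.cos Θ := ⟨_, rfl⟩
  obtain ⟨s, hs⟩ : ∃ x : ℝ, x = Real.sin Θ := ⟨_, rfl⟩
  rw [← hc, ← hs] at hsc
  obtain ⟨α, hαd⟩ : ∃ x : ℝ,
      x = Real.sin i ^ 2 * (1 + 4 * e ^ 2 - 5 * e ^ 2 * c ^ 2) / D3 := ⟨_, rfl⟩
  obtain ⟨β, hβd⟩ : ∃ x : ℝ, x = -(15 * c * eJ * e * (3 * e ^ 2 + 4)) / D5 := ⟨_, rfl⟩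
  obtain ⟨γ, hγd⟩ : ∃ x : ℝ, x = 5 * Real.sin i ^ 2 * c * s * e ^ 2 / D3 := ⟨_, rfl⟩
  obtain ⟨δ, hδd⟩ : ∃ x : ℝ, x = 15 * s * eJ * e * (3 * e ^ 2 + 4) / D5b := ⟨_, rfl⟩
  obtain ⟨ε, hεd⟩ : ∃ x : ℝ,
      x = Real.sin i ^ 2 * (5 * e ^ 2 * c ^ 2 - e ^ 2 + 1) / D3 := ⟨_, rfl⟩
  obtain ⟨ζ, hζd⟩ : ∃ x : ℝ,
      x = -(15 * Real.cos i * c * eJ * e * (3 * e ^ 2 + 4)) / D5 := ⟨_, rfl⟩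
  have hc2 : c ^ 2 ≤ 1 := by nlinarith [sq_nonneg s]
  have hX : 0 < 1 + 4 * e ^ 2 - 5 * e ^ 2 * c ^ 2 := by
    nlinarith [sq_nonneg e, sq_nonneg (e * c)]
  have hα : 0 < α := by rw [hαd]; positivity
  have hdet : 0 < α * ε - γ ^ 2 := by
    have htrig : (1 + 4 * e ^ 2 - 5 * e ^ 2 * c ^ 2) * (5 * e ^ 2 * c ^ 2 - e ^ 2 + 1)
        - (5 * e ^ 2 * c * s) ^ 2 = (1 + 4 * e ^ 2) * (1 - e ^ 2) := by
      linear_combination (-(25 * e ^ 4 * c ^ 2)) * hsc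
    have hform : α * ε - γ ^ 2 = (Real.sin i ^ 2 / D3) ^ 2 *
        ((1 + 4 * e ^ 2 - 5 * e ^ 2 * c ^ 2) * (5 * e ^ 2 * c ^ 2 - e ^ 2 + 1)
          - (5 * e ^ 2 * c * s) ^ 2) := by
      rw [hαd, hγd, hεd]
      field_simp
    rw [hform, htrig]
    have h1 : 0 < (Real.sin i ^ 2 / D3) ^ 2 := by positivity
    have h2 : 0 < (1 + 4 * e ^ 2) * (1 - e ^ 2) :=
      mul_pos (by positivity) (by nlinarith)
    exact mul_pos h1 h2
  obtain ⟨a₀, ha₀, H⟩ := exists_a0 α β γ δ ε ζ hα hdet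
  refine ⟨a₀, ha₀, ?_⟩
  intro a ha ha0 p q hpq
  obtain ⟨hA, hD⟩ := H a ha ha0
  have key := quad_pos_of (α + β * a) (γ + δ * a) (ε + ζ * a) hA hD p q hpq
  have heq : Abar2 e eJ Θ i G a * p ^ 2 + 2 * Bbar2 e eJ Θ i G a * p * q
      + Cbar2 e eJ Θ i G a * q ^ 2
      = a ^ 2 * ((α + β * a) * p ^ 2 + 2 * (γ + δ * a) * p * q + (ε + ζ * a) * q ^ 2) := by
    rw [Abar2, Bbar2, Cbar2, hαd, hβd, hγd, hδd, hεd, hζd, hD3, hD5, hD5b, hc, hs]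
    ring
  rw [heq]
  exact mul_pos (by positivity) key
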